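/- Let N ≥ 3, 1 < p < m, and let ρ : ℝ^N → ℝ be strictly positive with ρ1 ≤ 1/ρ(x) ≤ ρ2 for all |x| ≤ e, where ρ2 ≥ ρ1 > 0. Let α ∈ (0, 1/(m−1)) and β := (α(m−1)+1)/2. Then there exist constants C > 0 and a > 0 (depending only on m, p, N, α, ρ1, ρ2) such that for every T > 0 with 0 < T^{−β} < a/2, the function v(x,t) := C (T+t)^{α} G(x,t)^{1/(m−1)}, where G(x,t) := 1 − ((|x|^2 + e^2)/(2e^2)) (T+t)^{−β}/a, satisfies 1/2 < G(x,t) < 1 and the pointwise differential inequality ∂_t v(x,t) − ρ(x)^{−1} Δ_x (v^m)(x,t) − v(x,t)^p ≤ 0 at every point (x,t) with |x| < e and t > 0. -/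

import Mathlib

/-!
Write `s = T + t`, `q = 1/(m-1)` and `c = C s^α`, so that `v = c G^q` with `1/2 < G ≤ 1`.
Then `∂ₜv ≤ (α + qβ) c / s`; `v^m = c^m G^{qm}` is a power of a radial quadratic, whose
Laplacian is at least `-2NB·qm·c^m` (the `|∇G|²` term has a good sign, `B = s^{-β}/(2e²a)`
being the coefficient of `|x|²` in `G`); and `v^p ≥ 2^{-qp} c^p`. With `C = L s₀^{-α}` and
`a = 2 s₀^{-β}`, the condition `T^{-β} < a/2` says `s > s₀`, and in the variable `σ = s/s₀ ≥ 1`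
the two positive terms become, up to constants, `L σ^α/(s₀σ)` and `L^m σ^{αm-β}`. Since
`p < m` and `αm - β ≤ αp`, both are absorbed by `L^p σ^{αp}` once `L` is small and then `s₀`
is large.
-/

open MeasureTheory

/-- The Laplacian of `f : ℝ^N → ℝ` at `x`, as the sum of the second derivatives of `f`
along the coordinate directions. -/
noncomputable def lap {N : ℕ} (f : EuclideanSpace ℝ (Fin N) → ℝ)
    (x : EuclideanSpace ℝ (Fin N)) : ℝ :=
  ∑ i : Fin N, deriv (deriv fun t : ℝ => f (x + t • EuclideanSpace.single i (1 : ℝ))) 0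

open Filter Topology

lemma norm_add_smul_single_sq {N : ℕ} (x : EuclideanSpace ℝ (Fin N)) (i : Fin N) (τ : ℝ) :
    ‖x + τ • EuclideanSpace.single i (1 : ℝ)‖ ^ 2 = ‖x‖ ^ 2 + 2 * x i * τ + τ ^ 2 := by
  rw [norm_add_sq_real, real_inner_smul_right, norm_smul, EuclideanSpace.inner_single_right,
    PiLp.norm_single]
  simp only [Real.norm_eq_abs, sq_abs, norm_one, mul_one, conj_trivial]
  ring

lemma deriv_deriv_rpow_quadratic (κ A B u d r : ℝ) (hpos : 0 < A - B * u) :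
    deriv (deriv fun τ : ℝ => κ * (A - B * (u + 2 * d * τ + τ ^ 2)) ^ r) 0
      = -2 * B * κ * r * (A - B * u) ^ (r - 1)
        + 4 * B ^ 2 * κ * r * (r - 1) * (A - B * u) ^ (r - 2) * d ^ 2 := by
  set Q : ℝ → ℝ := fun τ => A - B * (u + 2 * d * τ + τ ^ 2)
  have hQ : ∀ τ, HasDerivAt Q (-(B * (2 * d + 2 * τ))) τ := fun τ => by
    have := (((hasDerivAt_id τ).const_mul (2 * d)).const_add u).add (hasDerivAt_pow 2 τ)
    simpa [Q] using (this.const_mul B).const_sub A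
  have hQ0 : Q 0 = A - B * u := by simp [Q]
  have hQpos : ∀ᶠ τ in 𝓝 0, 0 < Q τ :=
    continuousAt_const.eventually_lt (by fun_prop : Continuous Q).continuousAt (by rwa [hQ0])
  have hderiv : deriv (fun τ => κ * Q τ ^ r)
      =ᶠ[𝓝 0] fun τ => κ * (-(B * (2 * d + 2 * τ)) * r * Q τ ^ (r - 1)) := by
    filter_upwards [hQpos] with τ hτ
    exact (((hQ τ).rpow_const (Or.inl hτ.ne')).const_mul κ).deriv
  have hlin : HasDerivAt (fun τ : ℝ => -(B * (2 * d + 2 * τ))) (-(B * 2)) 0 := by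
    simpa using ((((hasDerivAt_id (0 : ℝ)).const_mul 2).const_add (2 * d)).const_mul B).fun_neg
  have hpow := (hQ 0).rpow_const (p := r - 1) (Or.inl (hQ0 ▸ hpos.ne'))
  rw [hderiv.deriv_eq, (((hlin.mul_const r).fun_mul hpow).const_mul κ).deriv, hQ0,
    show r - 1 - 1 = r - 2 by ring]
  ring

lemma Filter.EventuallyEq.lap_eq {N : ℕ} {f g : EuclideanSpace ℝ (Fin N) → ℝ}
    {x : EuclideanSpace ℝ (Fin N)} (h : f =ᶠ[𝓝 x] g) : lap f x = lap g x := by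
  refine Finset.sum_congr rfl fun i _ => EventuallyEq.deriv_eq (EventuallyEq.deriv ?_)
  have hline : Continuous fun t : ℝ => x + t • EuclideanSpace.single i (1 : ℝ) := by fun_prop
  exact (hline.tendsto' 0 x (by simp)).eventually h

lemma lap_const_mul_rpow_sub_mul_norm_sq {N : ℕ} (κ A B r : ℝ) (x : EuclideanSpace ℝ (Fin N))
    (hx : 0 < A - B * ‖x‖ ^ 2) :
    lap (fun y => κ * (A - B * ‖y‖ ^ 2) ^ r) x
      = -2 * N * B * κ * r * (A - B * ‖x‖ ^ 2) ^ (r - 1)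
        + 4 * B ^ 2 * ‖x‖ ^ 2 * κ * r * (r - 1) * (A - B * ‖x‖ ^ 2) ^ (r - 2) := by
  simp only [lap, norm_add_smul_single_sq, deriv_deriv_rpow_quadratic κ A B _ _ r hx]
  rw [Finset.sum_add_distrib, Finset.sum_const, ← Finset.mul_sum,
    ← EuclideanSpace.real_norm_sq_eq, Finset.card_univ, Fintype.card_fin, nsmul_eq_mul]
  ring

lemma neg_lap_const_mul_rpow_sub_mul_norm_sq_le {N : ℕ} {κ A B r : ℝ}
    (x : EuclideanSpace ℝ (Fin N)) (hκ : 0 ≤ κ) (hr : 1 ≤ r) (hx : 0 < A - B * ‖x‖ ^ 2) :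
    -lap (fun y => κ * (A - B * ‖y‖ ^ 2) ^ r) x
      ≤ 2 * N * B * κ * r * (A - B * ‖x‖ ^ 2) ^ (r - 1) := by
  rw [lap_const_mul_rpow_sub_mul_norm_sq κ A B r x hx]
  have : 0 ≤ 4 * B ^ 2 * ‖x‖ ^ 2 * κ * r * (r - 1) * (A - B * ‖x‖ ^ 2) ^ (r - 2) := by
    have : 0 ≤ r - 1 := by linarith
    positivity
  linarith

lemma neg_lap_radial_profile_le {N : ℕ} {c A B q m : ℝ} (x : EuclideanSpace ℝ (Fin N))
    (hc : 0 ≤ c) (hB : 0 ≤ B) (hqm : 1 ≤ q * m) (hx : 0 < A - B * ‖x‖ ^ 2)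
    (hx1 : A - B * ‖x‖ ^ 2 ≤ 1) :
    -lap (fun y => (c * (A - B * ‖y‖ ^ 2) ^ q) ^ m) x ≤ 2 * N * B * (q * m) * c ^ m := by
  have hprofile : (fun y => (c * (A - B * ‖y‖ ^ 2) ^ q) ^ m)
      =ᶠ[𝓝 x] fun y => c ^ m * (A - B * ‖y‖ ^ 2) ^ (q * m) := by
    filter_upwards [continuousAt_const.eventually_lt
      (g := fun y => A - B * ‖y‖ ^ 2) (by fun_prop) hx] with y hy
    rw [Real.mul_rpow hc (Real.rpow_nonneg hy.le q), ← Real.rpow_mul hy.le]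
  rw [hprofile.lap_eq]
  calc _ ≤ 2 * N * B * c ^ m * (q * m) * (A - B * ‖x‖ ^ 2) ^ (q * m - 1) :=
        neg_lap_const_mul_rpow_sub_mul_norm_sq_le x (by positivity) hqm hx
    _ ≤ 2 * N * B * c ^ m * (q * m) * 1 := by
        gcongr; exact Real.rpow_le_one hx.le hx1 (by linarith)
    _ = 2 * N * B * (q * m) * c ^ m := by ring

lemma neg_lap_weight_profile_le {N : ℕ} {c E b a q m : ℝ} (x : EuclideanSpace ℝ (Fin N))
    (hc : 0 ≤ c) (hE : 1 ≤ E) (hb : 0 ≤ b) (ha : 0 < a) (hqm : 1 ≤ q * m)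
    (hx : 0 < 1 - (‖x‖ ^ 2 + E) / (2 * E) * b / a) :
    -lap (fun y => (c * (1 - (‖y‖ ^ 2 + E) / (2 * E) * b / a) ^ q) ^ m) x
      ≤ N * (q * m) * c ^ m * (b / a) := by
  have hE0 : 0 < E := by linarith
  have hAB : ∀ u : ℝ, 1 - (u + E) / (2 * E) * b / a = (1 - b / (2 * a)) - b / (2 * E * a) * u :=
    fun u => by field_simp; ring
  simp only [hAB] at hx ⊢
  have hx1 : (1 - b / (2 * a)) - b / (2 * E * a) * ‖x‖ ^ 2 ≤ 1 := by
    have : 0 ≤ b / (2 * a) + b / (2 * E * a) * ‖x‖ ^ 2 := by positivity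
    linarith
  have hB : 2 * (b / (2 * E * a)) ≤ b / a := by
    rw [show 2 * (b / (2 * E * a)) = b / a / E by field_simp]
    exact div_le_self (by positivity) hE
  calc _ ≤ 2 * N * (b / (2 * E * a)) * (q * m) * c ^ m :=
        neg_lap_radial_profile_le x hc (by positivity) hqm hx hx1
    _ = N * (q * m) * c ^ m * (2 * (b / (2 * E * a))) := by ring
    _ ≤ N * (q * m) * c ^ m * (b / a) := by gcongr

lemma deriv_rpow_mul_one_sub_rpow_le {α β q b s : ℝ} (hs : 0 < s) (hα : 0 ≤ α)
    (hβ : 0 ≤ β) (hq : 0 ≤ q) (hb : 0 ≤ b) (hbs : b * s ^ (-β) ≤ 1 / 2) :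
    deriv (fun σ => σ ^ α * (1 - b * σ ^ (-β)) ^ q) s ≤ (α + q * β) * s ^ (α - 1) := by
  set g := 1 - b * s ^ (-β)
  have hg_lo : 1 / 2 ≤ g := by linarith
  have hg_pos : 0 < g := by linarith
  have hg_le : g ≤ 1 := by have := mul_nonneg hb (Real.rpow_nonneg hs.le (-β)); linarith
  have hgq : g ^ q ≤ 1 := Real.rpow_le_one hg_pos.le hg_le hq
  have hdg : HasDerivAt (fun σ => 1 - b * σ ^ (-β)) (-(b * (-β * s ^ (-β - 1)))) s :=
    ((Real.hasDerivAt_rpow_const (Or.inl hs.ne')).const_mul b).const_sub 1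
  have hd := (Real.hasDerivAt_rpow_const (p := α) (Or.inl hs.ne')).fun_mul
    (hdg.rpow_const (p := q) (Or.inl hg_pos.ne'))
  have hpow : s ^ α * s ^ (-β - 1) = s ^ (α - 1) * s ^ (-β) := by
    rw [← Real.rpow_add hs, ← Real.rpow_add hs]; ring_nf
  -- `g ^ (q - 1) * (1 - g) = g ^ q * (1 - g) / g ≤ 1`, since `1 - g ≤ 1 / 2 ≤ g`
  have hsecond : g ^ (q - 1) * (b * s ^ (-β)) ≤ 1 := by
    rw [Real.rpow_sub_one hg_pos.ne', div_mul_eq_mul_div, div_le_one hg_pos]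
    nlinarith [Real.rpow_nonneg hg_pos.le q]
  rw [hd.deriv]
  calc α * s ^ (α - 1) * g ^ q + s ^ α * (-(b * (-β * s ^ (-β - 1))) * q * g ^ (q - 1))
      = s ^ (α - 1) * (α * g ^ q + q * β * (g ^ (q - 1) * (b * s ^ (-β)))) := by
        linear_combination (b * β * q * g ^ (q - 1)) * hpow
    _ ≤ s ^ (α - 1) * (α * 1 + q * β * 1) := by gcongr
    _ = (α + q * β) * s ^ (α - 1) := by ring

lemma deriv_shifted_profile_le {C T k a α β q t : ℝ} (hC : 0 ≤ C) (hs : 0 < T + t)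
    (hα : 0 ≤ α) (hβ : 0 ≤ β) (hq : 0 ≤ q) (hk : 0 ≤ k) (ha : 0 < a)
    (hkt : 1 / 2 ≤ 1 - k * (T + t) ^ (-β) / a) :
    deriv (fun σ => C * (T + σ) ^ α * (1 - k * (T + σ) ^ (-β) / a) ^ q) t
      ≤ (α + q * β) * (C * (T + t) ^ α) / (T + t) := by
  set f := fun σ : ℝ => σ ^ α * (1 - k / a * σ ^ (-β)) ^ q
  have hf : (fun σ => C * (T + σ) ^ α * (1 - k * (T + σ) ^ (-β) / a) ^ q)
      = fun σ => C * f (T + σ) := by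
    funext σ; simp only [f, mul_div_right_comm k, mul_assoc]
  rw [hf, deriv_const_mul_field, deriv_comp_const_add (f := f)]
  calc C * deriv f (T + t) ≤ C * ((α + q * β) * (T + t) ^ (α - 1)) := by
        gcongr
        refine deriv_rpow_mul_one_sub_rpow_le hs hα hβ hq (by positivity) ?_
        rw [← mul_div_right_comm]; linarith
    _ = (α + q * β) * (C * (T + t) ^ α) / (T + t) := by rw [Real.rpow_sub_one hs.ne']; ring

lemma half_rpow_mul_rpow_le {c g q p : ℝ} (hc : 0 ≤ c) (hg : 1 / 2 ≤ g) (hqp : 0 ≤ q * p) :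
    (1 / 2) ^ (q * p) * c ^ p ≤ (c * g ^ q) ^ p := by
  have hg0 : 0 ≤ g := by linarith
  rw [Real.mul_rpow hc (Real.rpow_nonneg hg0 q), ← Real.rpow_mul hg0, mul_comm]
  gcongr

lemma one_sub_weight_mem_Ioo {u E b a : ℝ} (hu : 0 ≤ u) (huE : u < E) (hb : 0 < b)
    (hba : b < a / 2) : 1 - (u + E) / (2 * E) * b / a ∈ Set.Ioo (1 / 2) 1 := by
  have hE : 0 < E := by linarith
  have ha : 0 < a := by linarith
  have hk : (u + E) / (2 * E) < 1 := by rw [div_lt_one (by positivity)]; linarith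
  have hk0 : 0 < (u + E) / (2 * E) := by positivity
  have hlt : (u + E) / (2 * E) * b / a < 1 / 2 := by rw [div_lt_iff₀ ha]; nlinarith
  have hpos : 0 < (u + E) / (2 * E) * b / a := by positivity
  constructor <;> linarith

noncomputable def innerWeight {N : ℕ} (a β T : ℝ) (y : EuclideanSpace ℝ (Fin N)) (s : ℝ) :
    ℝ :=
  1 - (‖y‖ ^ 2 + Real.exp 1 ^ 2) / (2 * Real.exp 1 ^ 2) * (T + s) ^ (-β) / a

noncomputable def innerBarrier {N : ℕ} (C α q a β T : ℝ) (y : EuclideanSpace ℝ (Fin N))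
    (s : ℝ) : ℝ :=
  C * (T + s) ^ α * innerWeight a β T y s ^ q

lemma innerWeight_mem_Ioo {N : ℕ} {a β T t : ℝ} {x : EuclideanSpace ℝ (Fin N)}
    (hx : ‖x‖ < Real.exp 1) (hs : 0 < T + t) (hsa : (T + t) ^ (-β) < a / 2) :
    innerWeight a β T x t ∈ Set.Ioo (1 / 2) 1 :=
  one_sub_weight_mem_Ioo (sq_nonneg ‖x‖) (pow_lt_pow_left₀ hx (norm_nonneg _) two_ne_zero)
    (Real.rpow_pos_of_pos hs (-β)) hsa

lemma innerBarrier_residual_le {N : ℕ} {C α q a β m p T t r R : ℝ}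
    (x : EuclideanSpace ℝ (Fin N)) (hC : 0 ≤ C) (hs : 0 < T + t) (hα : 0 ≤ α) (hβ : 0 ≤ β)
    (hq : 0 ≤ q) (hqm : 1 ≤ q * m) (hqp : 0 ≤ q * p) (ha : 0 < a)
    (hG : 1 / 2 < innerWeight a β T x t) (hr : 0 ≤ r) (hrR : r ≤ R) :
    deriv (fun s => innerBarrier C α q a β T x s) t
        - r * lap (fun y => innerBarrier C α q a β T y t ^ m) x
        - innerBarrier C α q a β T x t ^ p
      ≤ (α + q * β) * (C * (T + t) ^ α) / (T + t)
        + R * N * (q * m) * (C * (T + t) ^ α) ^ m * ((T + t) ^ (-β) / a)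
        - (1 / 2) ^ (q * p) * (C * (T + t) ^ α) ^ p := by
  simp only [innerBarrier, innerWeight] at hG ⊢
  have hE : 1 ≤ Real.exp 1 ^ 2 := one_le_pow₀ (Real.one_le_exp zero_le_one)
  have htime := deriv_shifted_profile_le (C := C) (q := q) hC hs hα hβ hq (by positivity) ha hG.le
  have hlap := neg_lap_weight_profile_le x (c := C * (T + t) ^ α) (a := a) (by positivity) hE
    (Real.rpow_pos_of_pos hs (-β)).le ha hqm (by linarith)
  have hvp := half_rpow_mul_rpow_le (c := C * (T + t) ^ α) (q := q) (p := p) (by positivity)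
    hG.le hqp
  have hrlap :
      r * -lap _ x ≤ R * (N * (q * m) * (C * (T + t) ^ α) ^ m * ((T + t) ^ (-β) / a)) :=
    (mul_le_mul_of_nonneg_left hlap hr).trans (mul_le_mul_of_nonneg_right hrR (by positivity))
  linarith

lemma balance_of_one_le {α β p m K₁ K₂ W L s₀ σ : ℝ} (hα : 0 ≤ α) (hp : 1 ≤ p)
    (hβ : α * (m - p) ≤ β) (hL : 0 < L) (hs₀ : 0 < s₀) (hσ : 1 ≤ σ) (hK₂ : 0 ≤ K₂)
    (hK₁L : K₁ ≤ W / 2 * L ^ (p - 1) * s₀) (hK₂L : K₂ * L ^ (m - p) ≤ W / 2) :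
    K₁ * (L * σ ^ α) / (s₀ * σ) + K₂ * (L * σ ^ α) ^ m * σ ^ (-β)
      ≤ W * (L * σ ^ α) ^ p := by
  have hσ0 : 0 < σ := by linarith
  have hW : 0 ≤ W := by nlinarith [mul_nonneg hK₂ (Real.rpow_nonneg hL.le (m - p))]
  set c := L * σ ^ α with hc
  have hc0 : 0 < c := by positivity
  have hfirst : K₁ ≤ W / 2 * c ^ (p - 1) * (s₀ * σ) := by
    have : L ^ (p - 1) ≤ c ^ (p - 1) := by
      gcongr; exact le_mul_of_one_le_right hL.le (Real.one_le_rpow hσ hα)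
    calc K₁ ≤ W / 2 * L ^ (p - 1) * s₀ := hK₁L
      _ ≤ W / 2 * c ^ (p - 1) * (s₀ * σ) := by
        gcongr; exact le_mul_of_one_le_right hs₀.le hσ
  have hsecond : K₂ * (c ^ (m - p) * σ ^ (-β)) ≤ W / 2 := by
    have : c ^ (m - p) * σ ^ (-β) ≤ L ^ (m - p) := by
      rw [hc, Real.mul_rpow hL.le (by positivity), ← Real.rpow_mul hσ0.le, mul_assoc,
        ← Real.rpow_add hσ0]
      exact mul_le_of_le_one_right (by positivity)
        (Real.rpow_le_one_of_one_le_of_nonpos hσ (by linarith))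
    calc K₂ * (c ^ (m - p) * σ ^ (-β)) ≤ K₂ * L ^ (m - p) := by gcongr
      _ ≤ W / 2 := hK₂L
  have hcp : c ^ p = c ^ (p - 1) * c := by rw [Real.rpow_sub_one hc0.ne']; field_simp
  have hcm : c ^ m = c ^ p * c ^ (m - p) := by rw [← Real.rpow_add hc0]; ring_nf
  have h1 : K₁ * c / (s₀ * σ) ≤ W / 2 * c ^ p := by
    rw [div_le_iff₀ (by positivity), hcp]
    nlinarith
  have h2 : K₂ * c ^ m * σ ^ (-β) ≤ W / 2 * c ^ p := by
    rw [hcm]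
    nlinarith [Real.rpow_pos_of_pos hc0 p]
  linarith

lemma exists_balance {α β p m K₁ K₂ W : ℝ} (hα : 0 ≤ α) (hβ : 0 < β) (hp : 1 ≤ p)
    (hpm : p < m) (hβα : α * (m - p) ≤ β) (hK₁ : 0 ≤ K₁) (hK₂ : 0 ≤ K₂) (hW : 0 < W) :
    ∃ C > 0, ∃ a > 0, ∀ s > 0, s ^ (-β) < a / 2 →
      K₁ * (C * s ^ α) / s + K₂ * (C * s ^ α) ^ m * (s ^ (-β) / a)
        ≤ W * (C * s ^ α) ^ p := by
  set L := (W / (K₂ + 1)) ^ (m - p)⁻¹ with hL_def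
  have hL : 0 < L := by positivity
  set s₀ := 2 * K₁ / (W * L ^ (p - 1)) + 1 with hs₀_def
  have hs₀ : 0 < s₀ := by positivity
  refine ⟨L * s₀ ^ (-α), by positivity, 2 * s₀ ^ (-β), by positivity, fun s hs hsa => ?_⟩
  have hs₀s : s₀ ≤ s :=
    ((Real.rpow_lt_rpow_iff_of_neg hs hs₀ (neg_lt_zero.2 hβ)).1 (by linarith)).le
  have hc : L * s₀ ^ (-α) * s ^ α = L * (s / s₀) ^ α := by
    rw [Real.div_rpow hs.le hs₀.le, Real.rpow_neg hs₀.le]; ring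
  have hb : s ^ (-β) / (2 * s₀ ^ (-β)) = (s / s₀) ^ (-β) / 2 := by
    rw [Real.div_rpow hs.le hs₀.le]; field_simp
  have hK₁L : K₁ ≤ W / 2 * L ^ (p - 1) * s₀ := by
    have : W * L ^ (p - 1) * s₀ = 2 * K₁ + W * L ^ (p - 1) := by rw [hs₀_def]; field_simp
    nlinarith [mul_pos hW (Real.rpow_pos_of_pos hL (p - 1))]
  have hK₂L : K₂ / 2 * L ^ (m - p) ≤ W / 2 := by
    rw [hL_def, ← Real.rpow_mul (by positivity), inv_mul_cancel₀ (by linarith), Real.rpow_one]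
    have : K₂ * (W / (K₂ + 1)) ≤ W := by
      rw [mul_div_assoc', div_le_iff₀ (by positivity)]; nlinarith
    linarith
  have key := balance_of_one_le hα hp hβα hL hs₀ ((one_le_div hs₀).2 hs₀s) (by positivity)
    hK₁L hK₂L
  rw [show s₀ * (s / s₀) = s by field_simp] at key
  rw [hc, hb]
  linarith

theorem inner_subsolution_general
    (N : ℕ) (m p : ℝ) (hp : 1 < p) (hpm : p < m)
    (ρ : EuclideanSpace ℝ (Fin N) → ℝ)
    (ρ1 ρ2 : ℝ) (hρ1 : 0 < ρ1) (hρ12 : ρ1 ≤ ρ2)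
    (hin : ∀ x : EuclideanSpace ℝ (Fin N), ‖x‖ ≤ Real.exp 1 →
      ρ1 ≤ (ρ x)⁻¹ ∧ (ρ x)⁻¹ ≤ ρ2)
    (α β : ℝ) (hα : 0 < α) (hα' : α < 1 / (m - 1)) (hβ : β = (α * (m - 1) + 1) / 2) :
    ∃ C : ℝ, 0 < C ∧ ∃ a : ℝ, 0 < a ∧
      ∀ T : ℝ, 0 < T → T ^ (-β) < a / 2 →
        let G : EuclideanSpace ℝ (Fin N) → ℝ → ℝ :=
          fun y s => 1 - (‖y‖ ^ 2 + Real.exp 1 ^ 2) / (2 * Real.exp 1 ^ 2) * (T + s) ^ (-β) / a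
        let v : EuclideanSpace ℝ (Fin N) → ℝ → ℝ :=
          fun y s => C * (T + s) ^ α * G y s ^ (1 / (m - 1))
        ∀ (x : EuclideanSpace ℝ (Fin N)) (t : ℝ),
          ‖x‖ < Real.exp 1 → 0 < t →
          (1 / 2 < G x t ∧ G x t < 1) ∧
          deriv (fun s => v x s) t - (ρ x)⁻¹ * lap (fun y => v y t ^ m) x - v x t ^ p ≤ 0 := by
  have hm1 : 0 < m - 1 := by linarith
  have hαm : α * (m - 1) < 1 := by rwa [lt_div_iff₀ hm1] at hα'
  have hβ0 : 0 < β := by rw [hβ]; positivity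
  have hβα : α * (m - p) ≤ β := by rw [hβ]; nlinarith
  set q := 1 / (m - 1)
  have hqm : 1 ≤ q * m := by rw [one_div_mul_eq_div, le_div_iff₀ hm1]; linarith
  obtain ⟨C, hC, a, ha, hbalance⟩ := exists_balance hα.le hβ0 hp.le hpm hβα
    (K₁ := α + q * β) (K₂ := ρ2 * N * (q * m)) (W := (1 / 2) ^ (q * p))
    (by positivity) (by have : 0 < ρ2 := hρ1.trans_le hρ12; positivity) (by positivity)
  refine ⟨C, hC, a, ha, fun T hT hTa x t hx ht => ?_⟩
  have hs : 0 < T + t := by linarith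
  have hsa : (T + t) ^ (-β) < a / 2 :=
    (Real.rpow_le_rpow_of_nonpos hT (by linarith) (by linarith)).trans_lt hTa
  have hG := innerWeight_mem_Ioo hx hs hsa
  have hρx := hin x hx.le
  refine ⟨hG, (innerBarrier_residual_le x hC.le hs hα.le hβ0.le (by positivity) hqm
    (by positivity) ha hG.1 (hρ1.le.trans hρx.1) hρx.2).trans ?_⟩
  linarith [hbalance (T + t) hs hsa]

/-- Subsolution estimate in the inner ball: with
`G(x,t) = 1 - ((|x|² + e²)/(2e²)) (T+t)^{-β}/a` and `v(x,t) = C (T+t)^α G(x,t)^{1/(m-1)}`,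
there are `C, a > 0` such that for every `T > 0` with `T^{-β} < a/2`, at every point with
`|x| < e` and `t > 0` one has `1/2 < G < 1` and `∂_t v - ρ⁻¹ Δ(v^m) - v^p ≤ 0`. -/
theorem inner_subsolution
    (N : ℕ) (hN : 3 ≤ N) (m p : ℝ) (hp : 1 < p) (hpm : p < m)
    (ρ : EuclideanSpace ℝ (Fin N) → ℝ) (hρpos : ∀ x, 0 < ρ x)
    (ρ1 ρ2 : ℝ) (hρ1 : 0 < ρ1) (hρ12 : ρ1 ≤ ρ2)
    (hin : ∀ x : EuclideanSpace ℝ (Fin N), ‖x‖ ≤ Real.exp 1 →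
      ρ1 ≤ (ρ x)⁻¹ ∧ (ρ x)⁻¹ ≤ ρ2)
    (α β : ℝ) (hα : 0 < α) (hα' : α < 1 / (m - 1)) (hβ : β = (α * (m - 1) + 1) / 2) :
    ∃ C : ℝ, 0 < C ∧ ∃ a : ℝ, 0 < a ∧
      ∀ T : ℝ, 0 < T → T ^ (-β) < a / 2 →
        let G : EuclideanSpace ℝ (Fin N) → ℝ → ℝ :=
          fun y s => 1 - (‖y‖ ^ 2 + Real.exp 1 ^ 2) / (2 * Real.exp 1 ^ 2) * (T + s) ^ (-β) / a
        let v : EuclideanSpace ℝ (Fin N) → ℝ → ℝ :=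
          fun y s => C * (T + s) ^ α * G y s ^ (1 / (m - 1))
        ∀ (x : EuclideanSpace ℝ (Fin N)) (t : ℝ),
          ‖x‖ < Real.exp 1 → 0 < t →
          (1 / 2 < G x t ∧ G x t < 1) ∧
          deriv (fun s => v x s) t - (ρ x)⁻¹ * lap (fun y => v y t ^ m) x - v x t ^ p ≤ 0 :=
  inner_subsolution_general N m p hp hpm ρ ρ1 ρ2 hρ1 hρ12 hin α β hα hα' hβ
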